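/- Let (Ω, 𝓕, ℙ) be a probability space, let 𝒜 and ℬ be sub-σ-algebras of 𝓕, and let δ ≥ 0 satisfy |ℙ(A ∩ B) − ℙ(A)ℙ(B)| ≤ δ for every A ∈ 𝒜 and B ∈ ℬ. Then for every bounded nonnegative 𝒜-measurable random variable f and every bounded nonnegative ℬ-measurable random variable g, |𝔼[f g] − 𝔼[f]𝔼[g]| ≤ δ · ‖f‖_∞ · ‖g‖_∞. -/

import Mathlib

open MeasureTheory Set ENNReal

/-!
By the layer cake formula, a function with `0 ≤ f ≤ M` a.e. satisfies
`f = ∫₀^M 1{s < f} ds`, so by Tonelli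
`𝔼[fg] - 𝔼[f]𝔼[g] = ∫₀^M ∫₀^N (ℙ(f > s, g > t) - ℙ(f > s) ℙ(g > t)) dt ds`.
The integrand is at most `δ` in absolute value because `{f > s} ∈ 𝒜` and `{g > t} ∈ ℬ`.
-/

theorem ENNReal.abs_toReal_sub_le_toReal_iff {x y d : ℝ≥0∞} (hx : x ≠ ∞) (hy : y ≠ ∞)
    (hd : d ≠ ∞) : |x.toReal - y.toReal| ≤ d.toReal ↔ x ≤ y + d ∧ y ≤ x + d := by
  rw [abs_sub_le_iff, sub_le_iff_le_add', sub_le_iff_le_add', ← toReal_add hy hd,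
    ← toReal_add hx hd, toReal_le_toReal hx (add_ne_top.2 ⟨hy, hd⟩),
    toReal_le_toReal hy (add_ne_top.2 ⟨hx, hd⟩)]

namespace MeasureTheory

variable {α : Type*} [MeasurableSpace α] {μ : Measure α}

theorem lintegral_ofReal_eq_setLIntegral_Ioc_measure_lt {f : α → ℝ} {M : ℝ}
    (hf0 : 0 ≤ᵐ[μ] f) (hf : AEMeasurable f μ) (hfM : f ≤ᵐ[μ] fun _ ↦ M) :
    ∫⁻ ω, ENNReal.ofReal (f ω) ∂μ = ∫⁻ t in Ioc 0 M, μ {ω | t < f ω} := by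
  have hsupp : (fun t ↦ μ {ω | t < f ω}).support ⊆ Iic M := fun t ht ↦
    not_lt.1 fun hMt ↦ ht <| measure_eq_zero_iff_ae_notMem.2 <|
      hfM.mono fun ω hω ↦ (hω.trans hMt.le).not_gt
  rw [lintegral_eq_lintegral_meas_lt μ hf0 hf, ← Ioi_inter_Iic, inter_comm,
    ← Measure.restrict_restrict measurableSet_Iic, setLIntegral_eq_of_support_subset hsupp]

theorem lintegral_ofReal_mul_eq_setLIntegral_Ioc_measure_inter {f g : α → ℝ} {M N : ℝ}
    (hf0 : 0 ≤ᵐ[μ] f) (hg0 : 0 ≤ᵐ[μ] g) (hf : Measurable f) (hg : Measurable g)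
    (hfM : f ≤ᵐ[μ] fun _ ↦ M) (hgN : g ≤ᵐ[μ] fun _ ↦ N) :
    ∫⁻ ω, ENNReal.ofReal (f ω * g ω) ∂μ =
      ∫⁻ s in Ioc 0 M, ∫⁻ t in Ioc 0 N, μ ({ω | s < f ω} ∩ {ω | t < g ω}) := by
  -- `𝔼[fg]` is the integral of `f` against `g • μ`; apply the layer cake to `f` and then to `g`.
  set ν := μ.withDensity fun ω ↦ ENNReal.ofReal (g ω)
  have hν : ν ≪ μ := withDensity_absolutelyContinuous μ _
  have hmul : ∫⁻ ω, ENNReal.ofReal (f ω * g ω) ∂μ = ∫⁻ ω, ENNReal.ofReal (f ω) ∂ν := by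
    rw [lintegral_withDensity_eq_lintegral_mul μ hg.ennreal_ofReal hf.ennreal_ofReal]
    refine lintegral_congr_ae ?_
    filter_upwards [hg0] with ω hω
    rw [Pi.mul_apply, mul_comm, ENNReal.ofReal_mul hω]
  have hlevel (s : ℝ) : ν {ω | s < f ω} = ∫⁻ t in Ioc 0 N, μ ({ω | s < f ω} ∩ {ω | t < g ω}) := by
    rw [withDensity_apply _ (measurableSet_lt measurable_const hf),
      lintegral_ofReal_eq_setLIntegral_Ioc_measure_lt (ae_restrict_of_ae hg0) hg.aemeasurable
        (ae_restrict_of_ae hgN)]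
    refine lintegral_congr fun t ↦ ?_
    rw [Measure.restrict_apply (measurableSet_lt measurable_const hg), inter_comm]
  rw [hmul, lintegral_ofReal_eq_setLIntegral_Ioc_measure_lt (hν.ae_le hf0) hf.aemeasurable
    (hν.ae_le hfM)]
  exact lintegral_congr fun s ↦ hlevel s

theorem measurable_measure_setOf_lt (f : α → ℝ) : Measurable fun t ↦ μ {ω | t < f ω} :=
  Antitone.measurable fun _ _ hst ↦ measure_mono fun _ h ↦ hst.trans_lt h

theorem lintegral_lintegral_add_const {β γ : Type*} [MeasurableSpace β] [MeasurableSpace γ]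
    (ν₁ : Measure β) (ν₂ : Measure γ) (F : β → γ → ℝ≥0∞) (c : ℝ≥0∞) :
    ∫⁻ x, ∫⁻ y, (F x y + c) ∂ν₂ ∂ν₁ = ∫⁻ x, ∫⁻ y, F x y ∂ν₂ ∂ν₁ + c * ν₂ univ * ν₁ univ := by
  simp_rw [lintegral_add_right _ measurable_const, lintegral_const]

theorem abs_toReal_lintegral_lintegral_sub_mul_le {β γ : Type*} [MeasurableSpace β]
    [MeasurableSpace γ] {ν₁ : Measure β} {ν₂ : Measure γ} [IsFiniteMeasure ν₁]
    [IsFiniteMeasure ν₂] {P : β → γ → ℝ≥0∞} {a : β → ℝ≥0∞} {b : γ → ℝ≥0∞} {c : ℝ≥0∞}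
    (ha : AEMeasurable a ν₁) (hb : AEMeasurable b ν₂) (ha_fin : ∫⁻ x, a x ∂ν₁ ≠ ∞)
    (hb_fin : ∫⁻ y, b y ∂ν₂ ≠ ∞) (hc : c ≠ ∞)
    (hP : ∀ x y, P x y ≤ a x * b y + c ∧ a x * b y ≤ P x y + c) :
    |(∫⁻ x, ∫⁻ y, P x y ∂ν₂ ∂ν₁).toReal - ((∫⁻ x, a x ∂ν₁) * ∫⁻ y, b y ∂ν₂).toReal| ≤
      (c * ν₂ univ * ν₁ univ).toReal := by
  have hprod := lintegral_lintegral_mul ha hb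
  have hupper : ∫⁻ x, ∫⁻ y, P x y ∂ν₂ ∂ν₁ ≤
      (∫⁻ x, a x ∂ν₁) * (∫⁻ y, b y ∂ν₂) + c * ν₂ univ * ν₁ univ := by
    rw [← hprod, ← lintegral_lintegral_add_const]
    exact lintegral_mono fun x ↦ lintegral_mono fun y ↦ (hP x y).1
  have hlower : (∫⁻ x, a x ∂ν₁) * (∫⁻ y, b y ∂ν₂) ≤
      ∫⁻ x, ∫⁻ y, P x y ∂ν₂ ∂ν₁ + c * ν₂ univ * ν₁ univ := by
    rw [← hprod, ← lintegral_lintegral_add_const]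
    exact lintegral_mono fun x ↦ lintegral_mono fun y ↦ (hP x y).2
  have hQ : (∫⁻ x, a x ∂ν₁) * (∫⁻ y, b y ∂ν₂) ≠ ∞ := mul_ne_top ha_fin hb_fin
  have hD : c * ν₂ univ * ν₁ univ ≠ ∞ := by finiteness
  exact (abs_toReal_sub_le_toReal_iff (ne_top_of_le_ne_top (add_ne_top.2 ⟨hQ, hD⟩) hupper)
    hQ hD).2 ⟨hupper, hlower⟩

theorem MemLp.ae_le_toReal_eLpNorm_top {f : α → ℝ} (hf : MemLp f ∞ μ) :
    f ≤ᵐ[μ] fun _ ↦ (eLpNorm f ∞ μ).toReal := by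
  rw [toReal_eLpNorm hf.aestronglyMeasurable]
  exact (ae_le_lpNorm_exponent_top hf).mono fun _ h ↦ (le_abs_self _).trans h

end MeasureTheory

/-- **Decorrelation of bounded nonnegative random variables from a mixing bound on events.**
If `𝒜` and `ℬ` are sub-σ-algebras of `𝓕` such that `|ℙ(A ∩ B) − ℙ(A)ℙ(B)| ≤ δ` for all
`A ∈ 𝒜`, `B ∈ ℬ`, then for every bounded nonnegative `𝒜`-measurable `f` and bounded nonnegative
`ℬ`-measurable `g`, `|𝔼[fg] − 𝔼[f]𝔼[g]| ≤ δ ‖f‖_∞ ‖g‖_∞`. -/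
theorem decorrelation_of_mixing
    {Ω : Type*} {m0 : MeasurableSpace Ω} (μ : Measure Ω) [IsProbabilityMeasure μ]
    (m₁ m₂ : MeasurableSpace Ω) (hm₁ : m₁ ≤ m0) (hm₂ : m₂ ≤ m0)
    (δ : ℝ) (hδ : 0 ≤ δ)
    (hmix : ∀ A B : Set Ω, MeasurableSet[m₁] A → MeasurableSet[m₂] B →
      |(μ (A ∩ B)).toReal - (μ A).toReal * (μ B).toReal| ≤ δ)
    (f g : Ω → ℝ)
    (hf : Measurable[m₁] f) (hg : Measurable[m₂] g)
    (hf0 : ∀ ω, 0 ≤ f ω) (hg0 : ∀ ω, 0 ≤ g ω)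
    (hfb : MemLp f ⊤ μ) (hgb : MemLp g ⊤ μ) :
    |(∫ ω, f ω * g ω ∂μ) - (∫ ω, f ω ∂μ) * (∫ ω, g ω ∂μ)| ≤
      δ * (eLpNorm f ⊤ μ).toReal * (eLpNorm g ⊤ μ).toReal := by
  -- `m₁` and `m₂` are instances in scope as well; make `m0` the one that is found.
  let _ : MeasurableSpace Ω := m0
  have hfm : Measurable[m0] f := hf.mono hm₁ le_rfl
  have hgm : Measurable[m0] g := hg.mono hm₂ le_rfl
  have hf0' : 0 ≤ᵐ[μ] f := .of_forall hf0
  have hg0' : 0 ≤ᵐ[μ] g := .of_forall hg0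
  have hfM := hfb.ae_le_toReal_eLpNorm_top
  have hgN := hgb.ae_le_toReal_eLpNorm_top
  have hf_fin := (hfb.integrable le_top).lintegral_lt_top.ne
  have hg_fin := (hgb.integrable le_top).lintegral_lt_top.ne
  rw [lintegral_ofReal_eq_setLIntegral_Ioc_measure_lt hf0' hfm.aemeasurable hfM] at hf_fin
  rw [lintegral_ofReal_eq_setLIntegral_Ioc_measure_lt hg0' hgm.aemeasurable hgN] at hg_fin
  have hevents (s t : ℝ) :
      μ ({ω | s < f ω} ∩ {ω | t < g ω}) ≤
        μ {ω | s < f ω} * μ {ω | t < g ω} + ENNReal.ofReal δ ∧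
      μ {ω | s < f ω} * μ {ω | t < g ω} ≤
        μ ({ω | s < f ω} ∩ {ω | t < g ω}) + ENNReal.ofReal δ := by
    rw [← abs_toReal_sub_le_toReal_iff (measure_ne_top _ _) (by finiteness) ofReal_ne_top,
      toReal_mul, toReal_ofReal hδ]
    exact hmix _ _ (measurableSet_lt measurable_const hf) (measurableSet_lt measurable_const hg)
  have key := abs_toReal_lintegral_lintegral_sub_mul_le
    (measurable_measure_setOf_lt f).aemeasurable (measurable_measure_setOf_lt g).aemeasurable
    hf_fin hg_fin ofReal_ne_top hevents
  rw [← lintegral_ofReal_mul_eq_setLIntegral_Ioc_measure_inter hf0' hg0' hfm hgm hfM hgN,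
    ← lintegral_ofReal_eq_setLIntegral_Ioc_measure_lt hf0' hfm.aemeasurable hfM,
    ← lintegral_ofReal_eq_setLIntegral_Ioc_measure_lt hg0' hgm.aemeasurable hgN] at key
  rw [integral_eq_lintegral_of_nonneg_ae (.of_forall fun ω ↦ mul_nonneg (hf0 ω) (hg0 ω))
      (hfm.mul hgm).aestronglyMeasurable,
    integral_eq_lintegral_of_nonneg_ae hf0' hfm.aestronglyMeasurable,
    integral_eq_lintegral_of_nonneg_ae hg0' hgm.aestronglyMeasurable]
  simpa [toReal_mul, hδ, mul_right_comm] using key
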